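/- Let m ≥ 3 be a natural number and L > 0. Let S be a subset of the index set {1, 2, …, m−1} (i.e. a set of indices of Fin m not containing the smallest index 0) with 2·|S| ≤ m. Then the function t ↦ (∏_{l ∈ S} t_l)^{-1} · (t_0 + t_1 + ⋯ + t_{m-1})^{-1} is Lebesgue integrable on the ordered simplex {t ∈ ℝᵐ : 0 ≤ t_0 ≤ t_1 ≤ ⋯ ≤ t_{m-1} ≤ L}. -/

import Mathlib

open MeasureTheory Finset

/-!
Write `k = #S`. On the region `t 0` is the smallest coordinate, so `t 0 ^ k ≤ ∏_{l ∈ S} t l`,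
i.e. `(t 0 * ∏_S t) ^ k ≤ (∏_S t) ^ (k + 1)`; hence `(∏_S t)⁻¹ ≤ ∏_{j ∈ {0} ∪ S} t j ^ (-k/(k+1))`.
AM-GM gives `(∑ t)⁻¹ ≤ ∏_j t j ^ (-1/m)`. As `0 ∉ S`, every coordinate ends up with an exponent
`-q_j` where `q_j ≤ k/(k+1) + 1/m < 1` (because `k + 1 < m`), so the integrand is dominated on the
region by a product of one-variable functions `x ^ (-q_j)`, each integrable on `(0, L]`.
-/

theorem rpow_div_add_one_le_of_pow_le_pow_succ {x y : ℝ} {k : ℕ} (hx : 0 ≤ x) (hy : 0 ≤ y)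
    (h : x ^ k ≤ y ^ (k + 1)) : x ^ ((k : ℝ) / (k + 1)) ≤ y :=
  calc x ^ ((k : ℝ) / (k + 1)) = (x ^ k) ^ (((k + 1 : ℕ) : ℝ)⁻¹) := by
        rw [← Real.rpow_natCast_mul hx, div_eq_mul_inv]; push_cast; rfl
    _ ≤ (y ^ (k + 1)) ^ (((k + 1 : ℕ) : ℝ)⁻¹) := by gcongr
    _ = y := Real.pow_rpow_inv_natCast hy k.succ_ne_zero

section

variable {ι : Type*}

theorem inv_prod_le_mul_prod_rpow_neg {s : Finset ι} {t : ι → ℝ} {a : ℝ} (ha : 0 < a)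
    (hat : ∀ i ∈ s, a ≤ t i) :
    (∏ i ∈ s, t i)⁻¹ ≤ (a * ∏ i ∈ s, t i) ^ (-((#s : ℝ) / (#s + 1))) := by
  set Q := ∏ i ∈ s, t i
  have hpow : a ^ #s ≤ Q := by
    rw [← prod_const]
    exact prod_le_prod (fun _ _ => ha.le) hat
  have hQ : 0 < Q := (pow_pos ha _).trans_le hpow
  have hmain : (a * Q) ^ ((#s : ℝ) / (#s + 1)) ≤ Q := by
    refine rpow_div_add_one_le_of_pow_le_pow_succ (by positivity) hQ.le ?_
    rw [mul_pow, pow_succ']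
    exact mul_le_mul_of_nonneg_right hpow (by positivity)
  rw [Real.rpow_neg (by positivity)]
  exact inv_anti₀ (by positivity) hmain

variable [Fintype ι]

theorem inv_sum_le_prod_rpow_neg [Nonempty ι] {t : ι → ℝ} (ht : ∀ i, 0 < t i) :
    (∑ i, t i)⁻¹ ≤ ∏ i, t i ^ (-(Fintype.card ι : ℝ)⁻¹) := by
  have hcard : (1 : ℝ) ≤ Fintype.card ι := by exact_mod_cast Fintype.card_pos
  have hgm : ∏ i, t i ^ (Fintype.card ι : ℝ)⁻¹ ≤ ∑ i, t i := calc
    _ ≤ ∑ i, (Fintype.card ι : ℝ)⁻¹ * t i :=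
      Real.geom_mean_le_arith_mean_weighted univ _ _ (fun _ _ => by positivity)
        (by simp [card_univ]) fun i _ => (ht i).le
    _ ≤ ∑ i, t i := by
      rw [← mul_sum]
      exact mul_le_of_le_one_left (sum_nonneg fun i _ => (ht i).le) (inv_le_one_of_one_le₀ hcard)
  simp_rw [Real.rpow_neg (ht _).le, prod_inv_distrib]
  exact inv_anti₀ (prod_pos fun i _ => Real.rpow_pos_of_pos (ht i) _) hgm

theorem integrable_prod_indicator_Ioc_rpow_neg (L : ℝ) {q : ι → ℝ} (hq : ∀ j, q j < 1) :
    Integrable fun t : ι → ℝ => ∏ j, (Set.Ioc 0 L).indicator (· ^ (-q j)) (t j) :=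
  Integrable.fintype_prod fun j =>
    (intervalIntegral.intervalIntegrable_rpow' (by linarith [hq j])).1.integrable_indicator
      measurableSet_Ioc

theorem integrableOn_of_norm_le_prod_rpow_neg {F : Type*} [NormedAddCommGroup F]
    {f : (ι → ℝ) → F} {E : Set (ι → ℝ)} {L : ℝ} {q : ι → ℝ} (hq : ∀ j, q j < 1)
    (hE : MeasurableSet E) (hEL : ∀ t ∈ E, ∀ j, t j ∈ Set.Icc 0 L)
    (hf : AEStronglyMeasurable f (volume.restrict E))
    (hbound : ∀ t ∈ E, (∀ j, 0 < t j) → ‖f t‖ ≤ ∏ j, t j ^ (-q j)) :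
    IntegrableOn f E := by
  refine (integrable_prod_indicator_Ioc_rpow_neg L hq).integrableOn.mono' hf ?_
  have hne : ∀ᵐ t : ι → ℝ, ∀ j, t j ≠ 0 := ae_all_iff.2 fun j => Measure.ae_eval_ne _ j 0
  filter_upwards [ae_restrict_mem hE, ae_restrict_of_ae hne] with t htE ht0
  have hpos : ∀ j, 0 < t j := fun j => (hEL t htE j).1.lt_of_ne' (ht0 j)
  refine (hbound t htE hpos).trans_eq (prod_congr rfl fun j _ => ?_)
  rw [Set.indicator_of_mem (show t j ∈ Set.Ioc 0 L from ⟨hpos j, (hEL t htE j).2⟩)]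

variable [DecidableEq ι]

noncomputable def wheelExponent (i₀ : ι) (S : Finset ι) (j : ι) : ℝ :=
  (if j ∈ insert i₀ S then (#S : ℝ) / (#S + 1) else 0) + (Fintype.card ι : ℝ)⁻¹

theorem wheelExponent_lt_one {i₀ : ι} {S : Finset ι} (h : #S + 1 < Fintype.card ι) (j : ι) :
    wheelExponent i₀ S j < 1 := by
  have hinv : (Fintype.card ι : ℝ)⁻¹ < ((#S : ℝ) + 1)⁻¹ :=
    inv_strictAnti₀ (by positivity) (by exact_mod_cast h)
  have hsum : (#S : ℝ) / (#S + 1) + ((#S : ℝ) + 1)⁻¹ = 1 := by field_simp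
  have hle : ((#S : ℝ) + 1)⁻¹ ≤ 1 := inv_le_one_of_one_le₀ (by simp)
  unfold wheelExponent
  split_ifs <;> linarith

theorem inv_prod_mul_inv_sum_le_prod_rpow_wheelExponent {i₀ : ι} {S : Finset ι} (hS : i₀ ∉ S)
    {t : ι → ℝ} (ht : ∀ j, 0 < t j) (hmin : ∀ l ∈ S, t i₀ ≤ t l) :
    (∏ l ∈ S, t l)⁻¹ * (∑ j, t j)⁻¹ ≤ ∏ j, t j ^ (-wheelExponent i₀ S j) := by
  have : Nonempty ι := ⟨i₀⟩
  set c : ℝ := #S / (#S + 1)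
  have hprod : (∏ l ∈ S, t l)⁻¹ ≤ ∏ j, if j ∈ insert i₀ S then t j ^ (-c) else 1 := by
    rw [prod_ite_mem, univ_inter, Real.finsetProd_rpow _ _ fun j _ => (ht j).le, prod_insert hS]
    exact inv_prod_le_mul_prod_rpow_neg (ht i₀) hmin
  calc _ ≤ (∏ j, if j ∈ insert i₀ S then t j ^ (-c) else 1) *
        ∏ j, t j ^ (-(Fintype.card ι : ℝ)⁻¹) :=
        mul_le_mul hprod (inv_sum_le_prod_rpow_neg ht)
          (inv_nonneg.2 (sum_nonneg fun j _ => (ht j).le))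
          (prod_nonneg fun j _ => by
            split_ifs
            exacts [Real.rpow_nonneg (ht j).le _, zero_le_one])
    _ = ∏ j, t j ^ (-wheelExponent i₀ S j) := by
        rw [← prod_mul_distrib]
        refine prod_congr rfl fun j _ => ?_
        rw [wheelExponent, neg_add, Real.rpow_add (ht j)]
        split_ifs <;> simp [c]

end

/-- Appendix B integrability estimate: for `m ≥ 3` and a set `S` of indices not containing
the smallest index `0` with `2·|S| ≤ m`, the function
`t ↦ (∏_{l∈S} t_l)⁻¹ · (∑ᵢ tᵢ)⁻¹` is Lebesgue integrable on the ordered simplex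
`{0 ≤ t₀ ≤ t₁ ≤ ⋯ ≤ t_{m-1} ≤ L}`. -/
theorem integrable_wheel_anomaly_time_integral (m : ℕ) (hm : 3 ≤ m) (L : ℝ)
    (S : Finset (Fin m)) (hS0 : (⟨0, by omega⟩ : Fin m) ∉ S) (hScard : 2 * S.card ≤ m) :
    IntegrableOn
      (fun t : Fin m → ℝ => (∏ l ∈ S, t l)⁻¹ * (∑ i, t i)⁻¹)
      {t : Fin m → ℝ | 0 ≤ t (⟨0, by omega⟩ : Fin m) ∧ (∀ i j, i ≤ j → t i ≤ t j) ∧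
        t (⟨m - 1, by omega⟩ : Fin m) ≤ L} := by
  have hzero : ∀ j : Fin m, ⟨0, by omega⟩ ≤ j := fun j => Fin.le_def.2 (Nat.zero_le _)
  have hlast : ∀ j : Fin m, j ≤ ⟨m - 1, by omega⟩ := fun j =>
    Fin.le_def.2 (Nat.le_sub_one_of_lt j.isLt)
  refine integrableOn_of_norm_le_prod_rpow_neg (L := L) (q := wheelExponent ⟨0, by omega⟩ S)
    (wheelExponent_lt_one (by simp only [Fintype.card_fin]; omega)) ?_ ?_ (by fun_prop) ?_
  · measurability
  · rintro t ⟨h0, hmono, hL⟩ j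
    exact ⟨h0.trans (hmono _ _ (hzero j)), (hmono _ _ (hlast j)).trans hL⟩
  · rintro t ⟨-, hmono, -⟩ hpos
    rw [Real.norm_of_nonneg (mul_nonneg (inv_nonneg.2 (prod_nonneg fun l _ => (hpos l).le))
      (inv_nonneg.2 (sum_nonneg fun i _ => (hpos i).le)))]
    exact inv_prod_mul_inv_sum_le_prod_rpow_wheelExponent hS0 hpos fun l _ => hmono _ _ (hzero l)
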